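/- arXiv:2306.03334 — 2 statements merged into one kernel-verified Lean document; each statement's English description precedes it below -/
import Mathlib

section
/- Fix positive integers k and i with 0 ≤ i ≤ k, and define f(r) = 2(i+1)² - 2(i+1)r + (k+2)(r²-1)/(2k+3) for integers 1 ≤ r ≤ 2k+2. Then for r ≠ r' in this range, f(r) = f(r') holds if and only if r + r' = 2k+3 and 2(i+1) = k+2. In particular, if k is odd, then f is injective on {1,...,2k+2}. -/
/-- Four times the conformal weight of L(k,i) ⊗ V_{i+1,r}:
f(r) = 2(i+1)² - 2(i+1)r + (k+2)(r²-1)/(2k+3). -/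
def fwt (k i r : ℕ) : ℚ :=
  2 * ((i : ℚ) + 1)^2 - 2 * ((i : ℚ) + 1) * (r : ℚ) +
    ((k : ℚ) + 2) * ((r : ℚ)^2 - 1) / (2 * (k : ℚ) + 3)

lemma fwt_sub (k i r r' : ℕ) :
    fwt k i r - fwt k i r' =
      ((r : ℚ) - r') * (((k : ℚ) + 2) * ((r : ℚ) + r') - 2 * ((i : ℚ) + 1) * (2 * k + 3))
        / (2 * (k : ℚ) + 3) := by
  have h : (2 * (k : ℚ) + 3) ≠ 0 := by positivity
  unfold fwt
  field_simp
  ring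

lemma key_iff (k i r r' : ℕ) (hne : r ≠ r') :
    fwt k i r = fwt k i r' ↔ (k + 2) * (r + r') = 2 * (i + 1) * (2 * k + 3) := by
  have h : (2 * (k : ℚ) + 3) ≠ 0 := by positivity
  have hne' : (r : ℚ) - r' ≠ 0 := by
    intro hc
    exact hne (by exact_mod_cast sub_eq_zero.mp hc)
  constructor
  · intro heq
    have h0 : fwt k i r - fwt k i r' = 0 := by rw [heq]; ring
    rw [fwt_sub] at h0
    have h1 : ((k : ℚ) + 2) * ((r : ℚ) + r') - 2 * ((i : ℚ) + 1) * (2 * k + 3) = 0 := by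
      rcases mul_eq_zero.mp ((div_eq_zero_iff.mp h0).resolve_right h) with h2 | h2
      · exact absurd h2 hne'
      · exact h2
    have h2 : ((k : ℚ) + 2) * ((r : ℚ) + r') = 2 * ((i : ℚ) + 1) * (2 * k + 3) :=
      sub_eq_zero.mp h1
    exact_mod_cast h2
  · intro heq
    have heq' : ((k : ℚ) + 2) * ((r : ℚ) + r') = 2 * ((i : ℚ) + 1) * (2 * k + 3) := by
      exact_mod_cast heq
    have := fwt_sub k i r r'
    rw [heq'] at this
    have : fwt k i r - fwt k i r' = 0 := by rw [this]; ring
    linarith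

/-- For 1 ≤ r, r' ≤ 2k+2 with r ≠ r', f(r) = f(r') iff r + r' = 2k+3 and
2(i+1) = k+2; in particular, if k is odd then f is injective on {1,...,2k+2}. -/
theorem conformal_weights_distinct (k i : ℕ) (hk : 1 ≤ k) (hi : i ≤ k) :
    (∀ r r' : ℕ, 1 ≤ r → r ≤ 2 * k + 2 → 1 ≤ r' → r' ≤ 2 * k + 2 → r ≠ r' →
      (fwt k i r = fwt k i r' ↔ (r + r' = 2 * k + 3 ∧ 2 * (i + 1) = k + 2))) ∧
    (Odd k → ∀ r r' : ℕ, 1 ≤ r → r ≤ 2 * k + 2 → 1 ≤ r' → r' ≤ 2 * k + 2 →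
      fwt k i r = fwt k i r' → r = r') := by
  have main : ∀ r r' : ℕ, 1 ≤ r → r ≤ 2 * k + 2 → 1 ≤ r' → r' ≤ 2 * k + 2 → r ≠ r' →
      (fwt k i r = fwt k i r' ↔ (r + r' = 2 * k + 3 ∧ 2 * (i + 1) = k + 2)) := by
    intro r r' hr1 hr2 hr1' hr2' hne
    rw [key_iff k i r r' hne]
    constructor
    · intro heq
      have hcop : Nat.Coprime (2 * k + 3) (k + 2) := by
        have hd := Nat.dvd_sub ((Nat.gcd_dvd_right (2 * k + 3) (k + 2)).mul_left 2)
          (Nat.gcd_dvd_left (2 * k + 3) (k + 2))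
        have he : 2 * (k + 2) - (2 * k + 3) = 1 := by omega
        rw [he] at hd
        exact Nat.eq_one_of_dvd_one hd
      have hdvd : (2 * k + 3) ∣ (k + 2) * (r + r') :=
        ⟨2 * (i + 1), heq.trans (Nat.mul_comm _ _)⟩
      have hdvd' : (2 * k + 3) ∣ (r + r') := hcop.dvd_of_dvd_mul_left hdvd
      obtain ⟨c, hc⟩ := hdvd'
      have hc1 : c = 1 := by
        rcases c with _ | _ | n
        · simp at hc; omega
        · rfl
        · exfalso; nlinarith [hc, hr2, hr2']
      subst hc1
      have hsum : r + r' = 2 * k + 3 := by omega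
      refine ⟨hsum, ?_⟩
      rw [hsum] at heq
      have := Nat.eq_of_mul_eq_mul_right (show 0 < 2 * k + 3 by omega)
        (by linarith [heq] : (k + 2) * (2 * k + 3) = (2 * (i + 1)) * (2 * k + 3))
      omega
    · rintro ⟨h1, h2⟩
      rw [h1, ← h2]
  refine ⟨main, ?_⟩
  intro hodd r r' hr1 hr2 hr1' hr2' heq
  by_contra hne
  obtain ⟨-, h2⟩ := (main r r' hr1 hr2 hr1' hr2' hne).mp heq
  obtain ⟨m, hm⟩ := hodd
  omega
end

section
/- For an integer u ≥ 2 and N_{r,r'}^{u,r''} defined by N_{r,r'}^{u,r''} = 1 iff |r-r'|+1 ≤ r'' ≤ min(r+r'-1, 2u-r-r') and r+r'+r'' odd (0 otherwise), the fusion product is associative: for all 1 ≤ r, s, w, v ≤ u-1, Σ_{t=1}^{u-1} N_{r,s}^{u,t} N_{t,w}^{u,v} = Σ_{t=1}^{u-1} N_{s,w}^{u,t} N_{r,t}^{u,v}. -/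
/-- The Virasoro minimal model / level u-2 sl₂ fusion coefficients:
N_{r,r'}^{u,r''} = 1 iff |r-r'|+1 ≤ r'' ≤ min(r+r'-1, 2u-r-r') and r+r'+r''
is odd, and 0 otherwise. -/
def fusionN (u r r' r'' : ℤ) : ℤ :=
  if |r - r'| + 1 ≤ r'' ∧ r'' ≤ min (r + r' - 1) (2 * u - r - r') ∧
      Odd (r + r' + r'') then 1 else 0

/-- The fusion condition in a symmetric, abs/min-free form. -/
lemma fusionN_eq (u a b c : ℤ) :
    fusionN u a b c =
      if (a + b + c) % 2 = 1 ∧ a < b + c ∧ b < a + c ∧ c < a + b ∧ a + b + c ≤ 2 * u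
      then 1 else 0 := by
  unfold fusionN
  apply if_congr _ rfl rfl
  rw [Int.odd_iff]
  rcases abs_cases (a - b) with ⟨h, h'⟩ | ⟨h, h'⟩ <;> rw [h] <;> omega

lemma ite_one_zero_mul (p q : Prop) [Decidable p] [Decidable q] :
    (if p then (1 : ℤ) else 0) * (if q then 1 else 0) = if p ∧ q then 1 else 0 := by
  split_ifs with h1 h2 h3 <;> simp_all

set_option maxHeartbeats 4000000 in
/-- Forward direction of the key bijection. -/
lemma fusion_key₁ (u r s w v t d : ℤ)
    (hd : d = max (max (s-w) (w-s)) (max (r-v) (v-r)) -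
      max (max (r-s) (s-r)) (max (w-v) (v-w)))
    (h1 : (r+s+t)%2=1 ∧ r<s+t ∧ s<r+t ∧ t<r+s ∧ r+s+t ≤ 2*u)
    (h2 : (t+w+v)%2=1 ∧ t<w+v ∧ w<t+v ∧ v<t+w ∧ t+w+v ≤ 2*u) :
    ((s+w+(t+d))%2=1 ∧ s<w+(t+d) ∧ w<s+(t+d) ∧ (t+d)<s+w ∧ s+w+(t+d) ≤ 2*u) ∧
    ((r+(t+d)+v)%2=1 ∧ r<(t+d)+v ∧ (t+d)<r+v ∧ v<r+(t+d) ∧ r+(t+d)+v ≤ 2*u) ∧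
    1 ≤ t+d ∧ t+d ≤ u-1 := by
  omega

set_option maxHeartbeats 4000000 in
/-- Backward direction of the key bijection. -/
lemma fusion_key₂ (u r s w v t d : ℤ)
    (hd : d = max (max (s-w) (w-s)) (max (r-v) (v-r)) -
      max (max (r-s) (s-r)) (max (w-v) (v-w)))
    (h1 : (s+w+t)%2=1 ∧ s<w+t ∧ w<s+t ∧ t<s+w ∧ s+w+t ≤ 2*u)
    (h2 : (r+t+v)%2=1 ∧ r<t+v ∧ t<r+v ∧ v<r+t ∧ r+t+v ≤ 2*u) :
    ((r+s+(t-d))%2=1 ∧ r<s+(t-d) ∧ s<r+(t-d) ∧ (t-d)<r+s ∧ r+s+(t-d) ≤ 2*u) ∧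
    (((t-d)+w+v)%2=1 ∧ (t-d)<w+v ∧ w<(t-d)+v ∧ v<(t-d)+w ∧ (t-d)+w+v ≤ 2*u) ∧
    1 ≤ t-d ∧ t-d ≤ u-1 := by
  omega

/-- Associativity of the fusion ring:
Σ_t N_{r,s}^{u,t} N_{t,w}^{u,v} = Σ_t N_{s,w}^{u,t} N_{r,t}^{u,v}. -/
theorem fusionN_assoc (u : ℤ) (hu : 2 ≤ u) (r s w v : ℤ)
    (hr1 : 1 ≤ r) (hr2 : r ≤ u - 1) (hs1 : 1 ≤ s) (hs2 : s ≤ u - 1)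
    (hw1 : 1 ≤ w) (hw2 : w ≤ u - 1) (hv1 : 1 ≤ v) (hv2 : v ≤ u - 1) :
    ∑ t ∈ Finset.Icc (1 : ℤ) (u - 1), fusionN u r s t * fusionN u t w v =
      ∑ t ∈ Finset.Icc (1 : ℤ) (u - 1), fusionN u s w t * fusionN u r t v := by
  simp only [fusionN_eq, ite_one_zero_mul, Finset.sum_boole]
  congr 1
  set d := max (max (s-w) (w-s)) (max (r-v) (v-r)) -
      max (max (r-s) (s-r)) (max (w-v) (v-w)) with hd
  apply Finset.card_bij (fun t _ => t + d)
  · intro a ha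
    simp only [Finset.mem_filter, Finset.mem_Icc] at ha ⊢
    obtain ⟨hc2, hc1, hb1, hb2⟩ := fusion_key₁ u r s w v a d hd ha.2.1 ha.2.2
    exact ⟨⟨hb1, hb2⟩, hc2, hc1⟩
  · intro a _ b _ h
    omega
  · intro b hb
    simp only [Finset.mem_filter, Finset.mem_Icc] at hb
    obtain ⟨hc1, hc2, hb1, hb2⟩ := fusion_key₂ u r s w v b d hd hb.2.1 hb.2.2
    exact ⟨b - d, by
      simp only [Finset.mem_filter, Finset.mem_Icc]
      exact ⟨⟨hb1, hb2⟩, hc1, hc2⟩, by ring⟩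
end
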